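/- Let X_n have continuous density p_n with score ρ_n and suppose the boundary terms vanish as in the preceding identity. Then the Kolmogorov distance between X_n and a standard Gaussian satisfies Kol(X_n, Z) ≤ (1/2)√(π/2) · E[ |X_n + ρ_n(X_n)| ]. -/

import Mathlib

open Real MeasureTheory Set Filter

/-- Standard Gaussian pdf. -/
noncomputable def gaussPdf (x : ℝ) : ℝ := (Real.sqrt (2 * π))⁻¹ * Real.exp (-x ^ 2 / 2)

/-- Standard Gaussian cdf. -/
noncomputable def gaussCdf (x : ℝ) : ℝ := ∫ u in Set.Iic x, gaussPdf u

/-! Stein's method. The function `f_z = steinSolution z` solves `f' = x f + 1{x ≤ z} - Φ z` away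
from `z`, so `(f_z p)' = (1{x ≤ z} - Φ z) p + f_z (x + ρ) p`. Since `f_z φ ≤ 1` and `p / φ → 0` at
`±∞`, `f_z p` vanishes there and integrating gives `P(X ≤ z) - Φ z = -E[f_z(X) (X + ρ(X))]`. The
bound `0 ≤ f_z ≤ √(2π)/4 = ½√(π/2)` follows from `Φ (1 - Φ) ≤ (√(2π)/4) φ`. -/

open ProbabilityTheory Topology

lemma gaussPdf_eq_gaussianPDFReal : gaussPdf = gaussianPDFReal 0 1 := by
  ext x
  simp [gaussPdf, gaussianPDFReal]

lemma gaussPdf_pos (x : ℝ) : 0 < gaussPdf x :=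
  gaussPdf_eq_gaussianPDFReal ▸ gaussianPDFReal_pos 0 1 x one_ne_zero

lemma integrable_gaussPdf : Integrable gaussPdf :=
  gaussPdf_eq_gaussianPDFReal ▸ integrable_gaussianPDFReal 0 1

lemma integral_gaussPdf : ∫ x, gaussPdf x = 1 :=
  gaussPdf_eq_gaussianPDFReal ▸ integral_gaussianPDFReal_eq_one 0 one_ne_zero

lemma continuous_gaussPdf : Continuous gaussPdf := by
  unfold gaussPdf
  fun_prop

lemma gaussPdf_neg (x : ℝ) : gaussPdf (-x) = gaussPdf x := by
  simp [gaussPdf]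

lemma gaussPdf_zero : gaussPdf 0 = (√(2 * π))⁻¹ := by
  simp [gaussPdf]

lemma hasDerivAt_gaussPdf (x : ℝ) : HasDerivAt gaussPdf (-x * gaussPdf x) x := by
  have h : HasDerivAt (fun x : ℝ => -x ^ 2 / 2) (-x) x :=
    ((hasDerivAt_pow 2 x).neg.div_const 2).congr_deriv (by ring)
  exact (h.exp.const_mul (√(2 * π))⁻¹).congr_deriv (by rw [gaussPdf]; ring)

lemma antitoneOn_gaussPdf : AntitoneOn gaussPdf (Ici 0) := by
  intro x hx y _ hxy
  unfold gaussPdf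
  gcongr

lemma tendsto_gaussPdf_atTop : Tendsto gaussPdf atTop (𝓝 0) := by
  unfold gaussPdf
  have h : Tendsto (fun x : ℝ => -x ^ 2 / 2) atTop atBot :=
    (tendsto_neg_atTop_atBot.comp (tendsto_pow_atTop two_ne_zero)).atBot_div_const two_pos
  simpa [Function.comp_def] using (tendsto_exp_atBot.comp h).const_mul (√(2 * π))⁻¹

lemma gaussCdf_eq_cdf : gaussCdf = cdf (gaussianReal 0 1) := by
  ext x
  rw [cdf_eq_real, measureReal_def, gaussianReal_apply_eq_integral _ one_ne_zero,
    ENNReal.toReal_ofReal (setIntegral_nonneg measurableSet_Iic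
      fun y _ => gaussianPDFReal_nonneg 0 1 y), gaussCdf, gaussPdf_eq_gaussianPDFReal]

lemma gaussCdf_nonneg (x : ℝ) : 0 ≤ gaussCdf x := gaussCdf_eq_cdf ▸ cdf_nonneg _ x

lemma gaussCdf_le_one (x : ℝ) : gaussCdf x ≤ 1 := gaussCdf_eq_cdf ▸ cdf_le_one _ x

lemma monotone_gaussCdf : Monotone gaussCdf := gaussCdf_eq_cdf ▸ monotone_cdf _

lemma tendsto_gaussCdf_atTop : Tendsto gaussCdf atTop (𝓝 1) :=
  gaussCdf_eq_cdf ▸ tendsto_cdf_atTop _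

lemma integral_Ioi_gaussPdf (x : ℝ) : ∫ y in Ioi x, gaussPdf y = 1 - gaussCdf x := by
  rw [← integral_gaussPdf, ← intervalIntegral.integral_Iic_add_Ioi (b := x)
    integrable_gaussPdf.integrableOn integrable_gaussPdf.integrableOn, gaussCdf]
  ring

lemma gaussCdf_neg (x : ℝ) : gaussCdf (-x) = 1 - gaussCdf x := by
  rw [← integral_Ioi_gaussPdf, gaussCdf, ← integral_comp_neg_Ioi]
  simp only [gaussPdf_neg]

lemma gaussCdf_zero : gaussCdf 0 = 1 / 2 := by
  linarith [neg_zero (G := ℝ) ▸ gaussCdf_neg 0]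

lemma hasDerivAt_gaussCdf (x : ℝ) : HasDerivAt gaussCdf (gaussPdf x) x := by
  have h : gaussCdf = fun y => gaussCdf 0 + ∫ u in (0 : ℝ)..y, gaussPdf u := by
    ext y
    rw [← intervalIntegral.integral_Iic_sub_Iic integrable_gaussPdf.integrableOn
      integrable_gaussPdf.integrableOn, gaussCdf, gaussCdf]
    ring
  rw [h]
  exact (intervalIntegral.integral_hasDerivAt_right integrable_gaussPdf.intervalIntegrable
    (continuous_gaussPdf.stronglyMeasurableAtFilter _ _) continuous_gaussPdf.continuousAt).const_add _

lemma continuous_gaussCdf : Continuous gaussCdf :=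
  continuous_iff_continuousAt.2 fun x => (hasDerivAt_gaussCdf x).continuousAt

theorem ConcaveOn.neg_of_le_of_neg {w : ℝ → ℝ} {a r x : ℝ} (hw : ConcaveOn ℝ (Ici a) w)
    (ha : w a = 0) (har : a ≤ r) (hr : w r < 0) (hrx : r ≤ x) : w x < 0 := by
  obtain rfl | hrx := hrx.eq_or_lt
  · exact hr
  have har : a < r := har.lt_of_ne (by rintro rfl; linarith)
  have hslope := hw.slope_anti_adjacent self_mem_Ici (har.le.trans hrx.le) har hrx
  rw [ha, sub_zero] at hslope
  have : (w x - w r) / (x - r) < 0 := hslope.trans_lt (div_neg_of_neg_of_pos hr (by linarith))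
  linarith [(div_lt_iff₀ (sub_pos.2 hrx)).1 this]

theorem le_of_hasDerivAt_of_deriv_nonpos_after_neg {u u' : ℝ → ℝ} {a s m L : ℝ}
    (hu : ∀ x, HasDerivAt u (u' x) x)
    (hsign : ∀ r x, a ≤ r → r ≤ x → u' r < 0 → u' x ≤ 0)
    (ha : m ≤ u a) (hL : Tendsto u atTop (𝓝 L)) (hmL : m ≤ L) (hs : a ≤ s) : m ≤ u s := by
  have hcont : Continuous u := continuous_iff_continuousAt.2 fun x => (hu x).continuousAt
  by_cases hmono : ∀ r ∈ Icc a s, 0 ≤ u' r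
  · have : MonotoneOn u (Icc a s) :=
      monotoneOn_of_hasDerivWithinAt_nonneg (convex_Icc a s) hcont.continuousOn
        (fun x _ => (hu x).hasDerivWithinAt) fun x hx => hmono x (interior_subset hx)
    exact ha.trans (this (left_mem_Icc.2 hs) (right_mem_Icc.2 hs) hs)
  · push Not at hmono
    obtain ⟨r, ⟨har, hrs⟩, hr⟩ := hmono
    have : AntitoneOn u (Ici s) :=
      antitoneOn_of_hasDerivWithinAt_nonpos (convex_Ici s) hcont.continuousOn
        (fun x _ => (hu x).hasDerivWithinAt)
        fun x hx => hsign r x har (hrs.trans (interior_subset hx)) hr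
    refine hmL.trans (le_of_tendsto hL ?_)
    filter_upwards [eventually_ge_atTop s] with x hx
    exact this self_mem_Ici hx hx

/- `u = cφ - Φ(1 - Φ)` has `u' = φ w` with `w = 2Φ - 1 - c x` concave on `[0, ∞)` and `w 0 = 0`,
so `u` first increases and then decreases between `u 0 = 0` and `u ∞ = 0`. -/
lemma gaussCdf_mul_one_sub_le_of_nonneg {t : ℝ} (ht : 0 ≤ t) :
    gaussCdf t * (1 - gaussCdf t) ≤ √(2 * π) / 4 * gaussPdf t := by
  set c := √(2 * π) / 4
  set w : ℝ → ℝ := fun s => 2 * gaussCdf s - 1 - c * s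
  have hwd (s : ℝ) : HasDerivAt w (2 * gaussPdf s - c) s :=
    ((((hasDerivAt_gaussCdf s).const_mul 2).sub_const 1).sub
      ((hasDerivAt_id s).const_mul c)).congr_deriv (by simp)
  have hw : ConcaveOn ℝ (Ici 0) w := by
    refine AntitoneOn.concaveOn_of_deriv (convex_Ici 0)
      (fun s _ => (hwd s).continuousAt.continuousWithinAt)
      (fun s _ => (hwd s).differentiableAt.differentiableWithinAt) ?_
    rw [interior_Ici]
    intro x hx y hy hxy
    rw [(hwd x).deriv, (hwd y).deriv]
    linarith [antitoneOn_gaussPdf (Ioi_subset_Ici_self hx) (Ioi_subset_Ici_self hy) hxy]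
  have hw0 : w 0 = 0 := by simp [w, gaussCdf_zero]
  have hu : ∀ s, HasDerivAt (fun s => c * gaussPdf s - gaussCdf s * (1 - gaussCdf s))
      (gaussPdf s * w s) s := fun s =>
    (((hasDerivAt_gaussPdf s).const_mul c).sub
      ((hasDerivAt_gaussCdf s).mul ((hasDerivAt_gaussCdf s).const_sub 1))).congr_deriv
      (by simp only [w]; ring)
  have hsign (r x : ℝ) (hr : 0 ≤ r) (hrx : r ≤ x) (hur : gaussPdf r * w r < 0) :
      gaussPdf x * w x ≤ 0 :=
    mul_nonpos_of_nonneg_of_nonpos (gaussPdf_pos x).le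
      (hw.neg_of_le_of_neg hw0 hr (neg_of_mul_neg_right hur (gaussPdf_pos r).le) hrx).le
  have hu0 : 0 ≤ c * gaussPdf 0 - gaussCdf 0 * (1 - gaussCdf 0) := by
    have : c * gaussPdf 0 = 1 / 4 := by
      rw [gaussPdf_zero, div_mul_eq_mul_div, mul_inv_cancel₀ (by positivity)]
    rw [this, gaussCdf_zero]
    norm_num
  have hlim : Tendsto (fun s => c * gaussPdf s - gaussCdf s * (1 - gaussCdf s)) atTop (𝓝 0) := by
    simpa using (tendsto_gaussPdf_atTop.const_mul c).sub
      (tendsto_gaussCdf_atTop.mul (tendsto_gaussCdf_atTop.const_sub 1))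
  linarith [le_of_hasDerivAt_of_deriv_nonpos_after_neg hu hsign hu0 hlim le_rfl ht]

lemma gaussCdf_mul_one_sub_le (t : ℝ) :
    gaussCdf t * (1 - gaussCdf t) ≤ √(2 * π) / 4 * gaussPdf t := by
  rcases le_total 0 t with ht | ht
  · exact gaussCdf_mul_one_sub_le_of_nonneg ht
  · have h := gaussCdf_mul_one_sub_le_of_nonneg (neg_nonneg.2 ht)
    rw [gaussCdf_neg, gaussPdf_neg] at h
    linarith

lemma sqrt_two_mul_pi_div_four : √(2 * π) / 4 = 1 / 2 * √(π / 2) := by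
  rw [show 2 * π = π / 2 * 2 ^ 2 by ring, sqrt_mul' _ (by positivity), sqrt_sq zero_le_two]
  ring

/-- The bounded solution of the Stein equation `f' x = x f x + 1{x ≤ z} - Φ z`. -/
noncomputable def steinSolution (z x : ℝ) : ℝ :=
  (gaussCdf (min x z) - gaussCdf x * gaussCdf z) / gaussPdf x

lemma hasDerivAt_div_gaussPdf {q : ℝ → ℝ} {c x : ℝ} (hq : HasDerivAt q (gaussPdf x * c) x) :
    HasDerivAt (fun y => q y / gaussPdf y) (x * (q x / gaussPdf x) + c) x :=
  (hq.div (hasDerivAt_gaussPdf x) (gaussPdf_pos x).ne').congr_deriv (by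
    field_simp [(gaussPdf_pos x).ne']
    ring)

lemma hasDerivAt_steinSolution {z x : ℝ} (hx : x ≠ z) :
    HasDerivAt (steinSolution z)
      (x * steinSolution z x + ((Iic z).indicator 1 x - gaussCdf z)) x := by
  apply hasDerivAt_div_gaussPdf
  rcases hx.lt_or_gt with hxz | hxz
  · have hq : (fun y => gaussCdf (min y z) - gaussCdf y * gaussCdf z) =ᶠ[𝓝 x]
        fun y => gaussCdf y * (1 - gaussCdf z) := by
      filter_upwards [Iio_mem_nhds hxz] with y hy
      rw [min_eq_left hy.le]
      ring
    rw [indicator_of_mem (mem_Iic.2 hxz.le), Pi.one_apply]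
    exact ((hasDerivAt_gaussCdf x).mul_const _).congr_of_eventuallyEq hq
  · have hq : (fun y => gaussCdf (min y z) - gaussCdf y * gaussCdf z) =ᶠ[𝓝 x]
        fun y => gaussCdf z - gaussCdf y * gaussCdf z := by
      filter_upwards [Ioi_mem_nhds hxz] with y hy
      rw [min_eq_right hy.le]
    rw [indicator_of_notMem (notMem_Iic.2 hxz)]
    exact (((hasDerivAt_gaussCdf x).mul_const _).const_sub _).congr_of_eventuallyEq hq
      |>.congr_deriv (by ring)

lemma continuous_steinSolution (z : ℝ) : Continuous (steinSolution z) :=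
  ((continuous_gaussCdf.comp (continuous_id.min continuous_const)).sub
    (continuous_gaussCdf.mul continuous_const)).div continuous_gaussPdf
    fun x => (gaussPdf_pos x).ne'

lemma gaussCdf_min_sub_mul_nonneg (x z : ℝ) : 0 ≤ gaussCdf (min x z) - gaussCdf x * gaussCdf z := by
  rcases le_total x z with h | h
  · rw [min_eq_left h]
    nlinarith [gaussCdf_nonneg x, gaussCdf_le_one z]
  · rw [min_eq_right h]
    nlinarith [gaussCdf_nonneg z, gaussCdf_le_one x]

lemma gaussCdf_min_sub_mul_le (x z : ℝ) :
    gaussCdf (min x z) - gaussCdf x * gaussCdf z ≤ gaussCdf x * (1 - gaussCdf x) := by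
  rcases le_total x z with h | h
  · rw [min_eq_left h]
    nlinarith [gaussCdf_nonneg x, monotone_gaussCdf h]
  · rw [min_eq_right h]
    nlinarith [gaussCdf_le_one x, monotone_gaussCdf h]

lemma steinSolution_nonneg (z x : ℝ) : 0 ≤ steinSolution z x :=
  div_nonneg (gaussCdf_min_sub_mul_nonneg x z) (gaussPdf_pos x).le

lemma steinSolution_le (z x : ℝ) : steinSolution z x ≤ √(2 * π) / 4 :=
  (div_le_iff₀ (gaussPdf_pos x)).2
    ((gaussCdf_min_sub_mul_le x z).trans (gaussCdf_mul_one_sub_le x))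

lemma abs_steinSolution_mul_le (z x y : ℝ) : |steinSolution z x * y| ≤ √(2 * π) / 4 * |y| := by
  rw [abs_mul, abs_of_nonneg (steinSolution_nonneg z x)]
  exact mul_le_mul_of_nonneg_right (steinSolution_le z x) (abs_nonneg y)

lemma tendsto_steinSolution_mul {p : ℝ → ℝ} {l : Filter ℝ} (hp : ∀ x, 0 ≤ p x)
    (hl : Tendsto (fun x => p x / gaussPdf x) l (𝓝 0)) (z : ℝ) :
    Tendsto (fun x => steinSolution z x * p x) l (𝓝 0) := by
  refine squeeze_zero (fun x => mul_nonneg (steinSolution_nonneg z x) (hp x)) (fun x => ?_) hl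
  have hq : gaussCdf (min x z) - gaussCdf x * gaussCdf z ≤ 1 := by
    nlinarith [gaussCdf_min_sub_mul_le x z, gaussCdf_nonneg x, gaussCdf_le_one x]
  rw [steinSolution, div_mul_eq_mul_div]
  exact div_le_div_of_nonneg_right (mul_le_of_le_one_left (hp x) hq) (gaussPdf_pos x).le

theorem integral_of_hasDerivAt_of_ne_of_tendsto {E : Type*} [NormedAddCommGroup E]
    [NormedSpace ℝ E] [CompleteSpace E] {f f' : ℝ → E} {a : ℝ} {m n : E} (hf : Continuous f)
    (hderiv : ∀ x ≠ a, HasDerivAt f (f' x) x) (hf' : Integrable f')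
    (hbot : Tendsto f atBot (𝓝 m)) (htop : Tendsto f atTop (𝓝 n)) : ∫ x, f' x = n - m := by
  rw [← intervalIntegral.integral_Iic_add_Ioi (b := a) hf'.integrableOn hf'.integrableOn,
    integral_Iic_of_hasDerivAt_of_tendsto hf.continuousWithinAt (fun x hx => hderiv x hx.ne)
      hf'.integrableOn hbot,
    integral_Ioi_of_hasDerivAt_of_tendsto hf.continuousWithinAt (fun x hx => hderiv x hx.ne')
      hf'.integrableOn htop]
  abel

lemma integral_Iic_sub_gaussCdf_eq {p : ℝ → ℝ} (hpos : ∀ x, 0 < p x) (hmass : ∫ x, p x = 1)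
    (hdiff : ∀ x, DifferentiableAt ℝ p x)
    (hbot : Tendsto (fun x => p x / gaussPdf x) atBot (𝓝 0))
    (htop : Tendsto (fun x => p x / gaussPdf x) atTop (𝓝 0)) {z : ℝ}
    (hint : Integrable fun x => steinSolution z x * ((x + deriv p x / p x) * p x)) :
    (∫ x in Iic z, p x) - gaussCdf z =
      -∫ x, steinSolution z x * ((x + deriv p x / p x) * p x) := by
  have hp : Integrable p := Integrable.of_integral_ne_zero (by simp [hmass])
  have hderiv (x : ℝ) (hx : x ≠ z) : HasDerivAt (fun y => steinSolution z y * p y)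
      ((Iic z).indicator p x - gaussCdf z * p x +
        steinSolution z x * ((x + deriv p x / p x) * p x)) x :=
    ((hasDerivAt_steinSolution hx).mul (hdiff x).hasDerivAt).congr_deriv (by
      have := (hpos x).ne'
      by_cases hxz : x ≤ z <;> simp [indicator, hxz] <;> field_simp <;> ring)
  have hcentred : Integrable fun x => (Iic z).indicator p x - gaussCdf z * p x :=
    (hp.indicator measurableSet_Iic).sub (hp.const_mul _)
  have hibp := integral_of_hasDerivAt_of_ne_of_tendsto
    ((continuous_steinSolution z).mul
      (continuous_iff_continuousAt.2 fun x => (hdiff x).continuousAt)) hderiv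
    (hcentred.add hint)
    (tendsto_steinSolution_mul (fun x => (hpos x).le) hbot z)
    (tendsto_steinSolution_mul (fun x => (hpos x).le) htop z)
  rw [integral_add hcentred hint,
    integral_sub (hp.indicator measurableSet_Iic) (hp.const_mul _), integral_indicator
    measurableSet_Iic, integral_const_mul, hmass, sub_zero] at hibp
  linarith

theorem stmt16_general (p : ℝ → ℝ) (hpos : ∀ x, 0 < p x)
    (hmass : ∫ x, p x = 1)
    (hdiff : ∀ x, DifferentiableAt ℝ p x)
    (hbot : Tendsto (fun x => p x / gaussPdf x) atBot (nhds 0))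
    (htop : Tendsto (fun x => p x / gaussPdf x) atTop (nhds 0))
    (hInt : Integrable (fun x => |x + deriv p x / p x| * p x)) :
    ∀ z : ℝ,
      |(∫ x in Set.Iic z, p x) - gaussCdf z| ≤
        (1 / 2) * Real.sqrt (π / 2) * ∫ x, |x + deriv p x / p x| * p x := by
  intro z
  have hp : Continuous p := continuous_iff_continuousAt.2 fun x => (hdiff x).continuousAt
  have hbound (x : ℝ) : ‖steinSolution z x * ((x + deriv p x / p x) * p x)‖ ≤
      √(2 * π) / 4 * (|x + deriv p x / p x| * p x) := by
    simpa [abs_mul, abs_of_pos (hpos x)] using abs_steinSolution_mul_le z x ((x + deriv p x / p x) * p x)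
  have hint : Integrable fun x => steinSolution z x * ((x + deriv p x / p x) * p x) :=
    (hInt.const_mul _).mono' (((continuous_steinSolution z).measurable.mul
      ((measurable_id.add ((measurable_deriv p).div hp.measurable)).mul
        hp.measurable)).aestronglyMeasurable) (ae_of_all _ hbound)
  rw [integral_Iic_sub_gaussCdf_eq hpos hmass hdiff hbot htop hint, abs_neg,
    ← sqrt_two_mul_pi_div_four, ← integral_const_mul]
  exact (norm_integral_le_integral_norm _).trans
    (integral_mono hint.norm (hInt.const_mul _) hbound)

/-- Kolmogorov-distance bound for a standard Gaussian target: if `X_n` has density `p`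
with score `ρ = p'/p` and vanishing boundary terms, then
`sup_z |P(X_n ≤ z) - Φ(z)| ≤ (1/2)√(π/2) E[|X_n + ρ(X_n)|]`. -/
theorem stmt16 (p : ℝ → ℝ) (hmeas : Measurable p) (hpos : ∀ x, 0 < p x)
    (hmass : ∫ x, p x = 1)
    (hdiff : ∀ x, DifferentiableAt ℝ p x)
    (hbot : Tendsto (fun x => p x / gaussPdf x) atBot (nhds 0))
    (htop : Tendsto (fun x => p x / gaussPdf x) atTop (nhds 0))
    (hInt : Integrable (fun x => |x + deriv p x / p x| * p x)) :
    ∀ z : ℝ,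
      |(∫ x in Set.Iic z, p x) - gaussCdf z| ≤
        (1 / 2) * Real.sqrt (π / 2) * ∫ x, |x + deriv p x / p x| * p x :=
  stmt16_general p hpos hmass hdiff hbot htop hInt
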